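/- Let 𝒜 be a locally finite L-structure, ℬ an L'-structure, and suppose 𝒜 is a semi-retract of ℬ via (g, f). Let A be a finite substructure of 𝒜 and let A' = ⟨g(A)⟩_ℬ be the substructure of ℬ generated by g(A). Suppose d ≥ 1 is an integer such that ℬ →ᵉ (B₀)^{A'}_{r,d} for every finitely generated substructure B₀ of ℬ and every integer r ≥ 2. Then there is an integer d₀ ≥ 1 with |Aut(A)| · d₀ ≤ d such that 𝒜 → (B)^A_{r,d₀} for every finite substructure B of 𝒜 and every integer r ≥ 2; that is, A has Ramsey degree for substructures at most d / |Aut(A)| in 𝒜. -/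

import Mathlib

open FirstOrder FirstOrder.Language

/-- Two same-length tuples have the same quantifier-free type over ∅. -/
def SameQfType (L : FirstOrder.Language) (M : Type*) [L.Structure M] {n : ℕ}
    (x y : Fin n → M) : Prop :=
  ∀ φ : L.Formula (Fin n), φ.IsQF → (φ.Realize x ↔ φ.Realize y)

/-- A qftp-respecting injection between structures in possibly different languages. -/
def QftpRespecting (L L' : FirstOrder.Language) (M N : Type*) [L.Structure M] [L'.Structure N]
    (h : M → N) : Prop :=
  Function.Injective h ∧
    ∀ (n : ℕ) (x y : Fin n → M), SameQfType L M x y → SameQfType L' N (h ∘ x) (h ∘ y)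

/-- `(g, f)` is a semi-retraction between `M` and `N`: both maps are qftp-respecting
injections and `f ∘ g` is qftp-preserving (equivalently, an `L`-embedding of `M` into `M`). -/
def IsSemiRetraction (L L' : FirstOrder.Language) (M N : Type*)
    [L.Structure M] [L'.Structure N] (g : M → N) (f : N → M) : Prop :=
  QftpRespecting L L' M N g ∧ QftpRespecting L' L N M f ∧
    ∀ (n : ℕ) (x : Fin n → M), SameQfType L M x (f ∘ g ∘ x)

/-- `M` is locally finite: every finitely generated substructure is finite. -/
def StructLocallyFinite (L : FirstOrder.Language) (M : Type*) [L.Structure M] : Prop :=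
  ∀ S : L.Substructure M, S.FG → (S : Set M).Finite

/-- `M → (B)^A_{r,d}` for substructures. -/
def ArrowSub (L : FirstOrder.Language) (M : Type*) [L.Structure M]
    (A B : L.Substructure M) (r d : ℕ) : Prop :=
  ∀ c : L.Substructure M → Fin r, ∃ B' : L.Substructure M,
    Nonempty (B' ≃[L] B) ∧
      (c '' {A' : L.Substructure M | A' ≤ B' ∧ Nonempty (A' ≃[L] A)}).ncard ≤ d

/-- `M →ᵉ (B)^A_{r,d}` for embeddings. -/
def ArrowEmb (L : FirstOrder.Language) (M : Type*) [L.Structure M]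
    (A B : L.Substructure M) (r d : ℕ) : Prop :=
  ∀ c : (A ↪[L] M) → Fin r, ∃ h : B ↪[L] M,
    (c '' {j : A ↪[L] M | ∃ e : A ↪[L] B, j = h.comp e}).ncard ≤ d

/-- A structure is rigid if its only automorphism is the identity. -/
def IsRigidStructure (L : FirstOrder.Language) (M : Type*) [L.Structure M] : Prop :=
  ∀ σ : M ≃[L] M, ∀ x : M, σ x = x


/-!
Colour an embedding `j : ⟨g(A)⟩ ↪ ℬ` by the colour of the copy `f(j(g(A)))` of `A` together with
the automorphism of `A` by which `f ∘ j ∘ g` differs from a reference embedding fixed for that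
copy. An `h : ⟨g(B)⟩ ↪ ℬ` on whose restrictions at most `d` such colours occur produces the copy
`B' = f(h(g(B)))` of `B`. Every embedding `ψ` of `A` into `B'` is of the form `f ∘ h ∘ e ∘ g`:
since `g` respects quantifier-free types, `g(a) ↦ g(ψ' a)` (with `ψ = f ∘ h ∘ g ∘ ψ'`) extends to an
embedding `e` of `⟨g(A)⟩`. Hence each colour of a copy of `A` in `B'` appears paired with all
`|Aut(A)|` automorphisms, and `|Aut(A)|` times the number of such colours is at most `d`.
-/

open Set Function FirstOrder.Language.Substructure

namespace FirstOrder.Language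

variable {L : Language} {M : Type*} [L.Structure M]

theorem BoundedFormula.IsQF.subst {α β : Type*} {n : ℕ} {φ : L.BoundedFormula α n}
    (h : φ.IsQF) (tf : α → L.Term β) : (φ.subst tf).IsQF := by
  induction h with
  | falsum => exact isQF_bot
  | of_isAtomic ha =>
    cases ha with
    | equal => exact (IsAtomic.equal _ _).isQF
    | rel => exact (IsAtomic.rel _ _).isQF
  | imp _ _ ih₁ ih₂ => exact ih₁.imp ih₂

theorem Substructure.exists_term_realize_eq_of_mem_closure_range {α : Type*} {x : α → M} {a : M}
    (ha : a ∈ closure L (range x)) : ∃ t : L.Term α, t.realize x = a := by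
  obtain ⟨t, rfl⟩ := mem_closure_iff_exists_term.1 ha
  refine ⟨t.relabel (rangeSplitting x), ?_⟩
  simp only [Term.realize_relabel, comp_def, apply_rangeSplitting]

instance Equiv.finite_self {P : Type*} [L.Structure P] [Finite P] :
    Finite (P ≃[L] P) :=
  Finite.of_injective _ DFunLike.coe_injective

-- `τ φ` is the automorphism by which `φ` differs from a reference embedding onto its range.
theorem Embedding.exists_aut_labelling (P : Type*) [L.Structure P] :
    ∃ τ : (P ↪[L] M) → (P ≃[L] P), ∀ S : L.Substructure M, Nonempty (S ≃[L] P) →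
      ∀ σ : P ≃[L] P, ∃ φ : P ↪[L] M, φ.toHom.range = S ∧ τ φ = σ := by
  classical
  choose ι hι using fun (S : L.Substructure M) (hS : Nonempty (S ≃[L] P)) =>
    (⟨S.subtype.comp hS.some.symm.toEmbedding, by
      ext x
      refine ⟨?_, fun hx => ⟨hS.some ⟨x, hx⟩, by simp⟩⟩
      rintro ⟨y, rfl⟩
      exact (hS.some.symm y).2⟩ :
      ∃ ι : P ↪[L] M, ι.toHom.range = S)
  refine ⟨fun φ => if h : ∃ σ : P ≃[L] P, ⇑φ = ι _ ⟨φ.equivRange.symm⟩ ∘ σ then h.choose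
    else Equiv.refl L P, fun S hS σ => ?_⟩
  set φ := (ι S hS).comp σ.toEmbedding
  have hrange : φ.toHom.range = S := by
    refine Eq.trans ?_ (hι S hS)
    ext x
    simp only [Hom.mem_range]
    exact ⟨fun ⟨a, ha⟩ => ⟨σ a, ha⟩, fun ⟨b, hb⟩ => ⟨σ.symm b, by simp [φ, hb]⟩⟩
  have hιφ : ι _ ⟨φ.equivRange.symm⟩ = ι S hS := by simp_rw [hrange]
  have hlabel : ∃ σ' : P ≃[L] P, ⇑φ = ι _ ⟨φ.equivRange.symm⟩ ∘ σ' := ⟨σ, by rw [hιφ]; rfl⟩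
  refine ⟨φ, hrange, ?_⟩
  have hchoose : ⇑φ = ι S hS ∘ hlabel.choose := by
    rw [← hιφ]
    exact hlabel.choose_spec
  simp only [dif_pos hlabel]
  ext a
  exact ((ι S hS).injective (congrFun hchoose a)).symm

end FirstOrder.Language

section SameQfType

variable {L : FirstOrder.Language} {M : Type*} [L.Structure M] {n : ℕ}

theorem SameQfType.trans {x y z : Fin n → M} (hxy : SameQfType L M x y)
    (hyz : SameQfType L M y z) : SameQfType L M x z :=
  fun φ hφ => (hxy φ hφ).trans (hyz φ hφ)

theorem sameQfType_embedding_comp {P : Type*} [L.Structure P] (j₁ j₂ : P ↪[L] M)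
    (z : Fin n → P) : SameQfType L M (j₁ ∘ z) (j₂ ∘ z) := fun φ hφ => by
  have realize_comp (j : P ↪[L] M) : φ.Realize (j ∘ z) ↔ φ.Realize z := by
    rw [Formula.Realize, Formula.Realize, ← hφ.realize_embedding j,
      Unique.eq_default (j ∘ (default : Fin 0 → P))]
  rw [realize_comp, realize_comp]

theorem SameQfType.realize_term_eq_iff {x y : Fin n → M} (h : SameQfType L M x y)
    (t₁ t₂ : L.Term (Fin n)) : t₁.realize x = t₂.realize x ↔ t₁.realize y = t₂.realize y := by
  simpa using h (t₁.equal t₂) (BoundedFormula.IsAtomic.equal _ _).isQF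

theorem SameQfType.relMap_iff {x y : Fin n → M} (h : SameQfType L M x y) {m : ℕ}
    (R : L.Relations m) (ts : Fin m → L.Term (Fin n)) :
    Structure.RelMap R (fun i => (ts i).realize x) ↔
      Structure.RelMap R (fun i => (ts i).realize y) := by
  simpa using h (R.formula ts) (BoundedFormula.IsAtomic.rel _ _).isQF

theorem SameQfType.realize_terms {x y : Fin n → M} (h : SameQfType L M x y) {m : ℕ}
    (ts : Fin m → L.Term (Fin n)) :
    SameQfType L M (fun i => (ts i).realize x) (fun i => (ts i).realize y) := fun φ hφ => by
  simpa [Formula.Realize, BoundedFormula.realize_subst] using h _ (hφ.subst ts)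

end SameQfType

namespace FirstOrder.Language.Substructure

variable {L : FirstOrder.Language} {M : Type*} [L.Structure M]

theorem exists_embedding_of_forall_sameQfType (S : L.Substructure M) (F : S → M)
    (hF : ∀ (n : ℕ) (z : Fin n → S), SameQfType L M ((↑) ∘ z) (F ∘ z)) :
    ∃ e : S ↪[L] M, ⇑e = F := by
  refine ⟨⟨⟨F, fun s₁ s₂ h => ?_⟩, fun {m} q a => ?_, fun {m} R a => ?_⟩, rfl⟩
  · have := (hF 2 ![s₁, s₂]).realize_term_eq_iff (Term.var 0) (Term.var 1)
    simp only [Term.realize_var, comp_apply, Matrix.cons_val_zero, Matrix.cons_val_one] at this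
    exact Subtype.ext (this.2 h)
  · have := (hF (m + 1) (Fin.cons (Structure.funMap q a) a)).realize_term_eq_iff
      (Term.var 0) (Term.func q fun i => Term.var i.succ)
    simp only [Term.realize_var, Term.realize_func, comp_apply, Fin.cons_zero,
      Fin.cons_succ] at this
    exact this.1 rfl
  · have := (hF m a).relMap_iff R Term.var
    simp only [Term.realize_var] at this
    exact this.symm

theorem exists_embedding_of_sameQfType {n : ℕ} {x y : Fin n → M} (hxy : SameQfType L M x y)
    {S T : L.Substructure M} (hS : closure L (range x) = S) (hT : range y ⊆ T) :
    ∃ e : S ↪[L] T, ∀ i (hi : x i ∈ S), (e ⟨x i, hi⟩ : M) = y i := by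
  subst hS
  choose t ht using fun s : closure L (range x) =>
    exists_term_realize_eq_of_mem_closure_range s.2
  obtain ⟨e, he⟩ := exists_embedding_of_forall_sameQfType _ (fun s => (t s).realize y)
    fun m z => by simpa only [comp_def, ht] using hxy.realize_terms (t ∘ z)
  refine ⟨e.codRestrict T fun s => ?_, fun i hi => ?_⟩
  · rw [he]
    exact Term.realize_mem _ _ fun i => hT (mem_range_self i)
  · have := (hxy.realize_term_eq_iff (t ⟨x i, hi⟩) (Term.var i)).1 (ht _)
    simpa [he] using this

end FirstOrder.Language.Substructure

section ArrowEmb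

variable {L : FirstOrder.Language} {M : Type*} [L.Structure M]

theorem exists_ncard_image_le_of_forall_arrowEmb {A B : L.Substructure M} {d : ℕ}
    (h : ∀ r, 2 ≤ r → ArrowEmb L M A B r d) {κ : Type*} [Finite κ] (c : (A ↪[L] M) → κ) :
    ∃ e : B ↪[L] M, (c '' {j | ∃ e' : A ↪[L] B, j = e.comp e'}).ncard ≤ d := by
  let encode : κ ↪ Fin (Nat.card κ + 2) :=
    (Finite.equivFin κ).toEmbedding.trans (Fin.castLEEmb (by omega))
  obtain ⟨e, he⟩ := h _ (by omega) (encode ∘ c)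
  refine ⟨e, ?_⟩
  rwa [image_comp, ncard_image_of_injective _ encode.injective] at he

end ArrowEmb

section SemiRetraction

variable {L L' : FirstOrder.Language} {M N : Type*} [L.Structure M] [L'.Structure N]
  {g : M → N} {f : N → M}

theorem QftpRespecting.exists_embedding_closure_image (hg : QftpRespecting L L' M N g)
    {A : L.Substructure M} (hA : (A : Set M).Finite) (u : A ↪[L] M) {T : L'.Substructure N}
    (hT : ∀ a : A, g (u a) ∈ T) :
    ∃ e : closure L' (g '' A) ↪[L'] T,
      ∀ (a : A) (ha : g a ∈ closure L' (g '' A)), (e ⟨g a, ha⟩ : N) = g (u a) := by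
  have : Finite A := hA.to_subtype
  obtain ⟨n, ⟨enum⟩⟩ := Finite.exists_equiv_fin A
  have hxy := hg.2 n _ _ (sameQfType_embedding_comp A.subtype u enum.symm)
  obtain ⟨e, he⟩ := Substructure.exists_embedding_of_sameQfType hxy
    (S := closure L' (g '' A)) (T := T)
    (by simp [range_comp]) (by rintro _ ⟨i, rfl⟩; exact hT _)
  refine ⟨e, fun a ha => ?_⟩
  obtain ⟨i, rfl⟩ := enum.symm.surjective a
  exact he i ha

theorem IsSemiRetraction.exists_embedding (hsr : IsSemiRetraction L L' M N g f)
    {S : L.Substructure M} {T : L'.Substructure N} (hST : ∀ a ∈ S, g a ∈ T) (j : T ↪[L'] N) :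
    ∃ φ : S ↪[L] M, ∀ a : S, φ a = f (j ⟨g a, hST a a.2⟩) := by
  obtain ⟨φ, hφ⟩ := S.exists_embedding_of_forall_sameQfType (fun a => f (j ⟨g a, hST a a.2⟩))
    fun n z => (hsr.2.2 n _).trans <| hsr.2.1.2 n _ _ <|
      sameQfType_embedding_comp T.subtype j fun i => ⟨g (z i), hST _ (z i).2⟩
  exact ⟨φ, fun a => congrFun hφ a⟩

theorem IsSemiRetraction.exists_lift (hsr : IsSemiRetraction L L' M N g f)
    {A B : L.Substructure M} (hA : (A : Set M).Finite) {T : L'.Substructure N}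
    (hBT : ∀ b ∈ B, g b ∈ T) (h : T ↪[L'] N) {H : B ↪[L] M}
    (hH : ∀ b : B, H b = f (h ⟨g b, hBT b b.2⟩)) (ψ : A ↪[L] M)
    (hψ : ψ.toHom.range ≤ H.toHom.range) :
    ∃ e : closure L' (g '' A) ↪[L'] T,
      ∀ (a : A) (ha : g a ∈ closure L' (g '' A)), f (h (e ⟨g a, ha⟩)) = ψ a := by
  let u : A ↪[L] B :=
    H.equivRange.symm.toEmbedding.comp (ψ.codRestrict _ fun a => hψ ⟨a, rfl⟩)
  have hu : ∀ a, H (u a) = ψ a := fun _ =>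
    congrArg Subtype.val (H.equivRange.apply_symm_apply _)
  obtain ⟨e, he⟩ :=
    hsr.1.exists_embedding_closure_image hA (B.subtype.comp u) fun a => hBT _ (u a).2
  refine ⟨e, fun a ha => ?_⟩
  rw [← hu, hH]
  congr
  exact Subtype.ext (he a ha)

theorem IsSemiRetraction.exists_card_aut_mul_ncard_le (hsr : IsSemiRetraction L L' M N g f)
    {A : L.Substructure M} (hA : (A : Set M).Finite) {d : ℕ}
    (hdeg : ∀ B₀ : L'.Substructure N, B₀.FG → ∀ r : ℕ, 2 ≤ r →
      ArrowEmb L' N (closure L' (g '' (A : Set M))) B₀ r d)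
    {B : L.Substructure M} (hB : (B : Set M).Finite) {r : ℕ} (c : L.Substructure M → Fin r) :
    ∃ B' : L.Substructure M, Nonempty (B' ≃[L] B) ∧
      Nat.card (A ≃[L] A) * (c '' {A' | A' ≤ B' ∧ Nonempty (A' ≃[L] A)}).ncard ≤ d := by
  have : Finite A := hA.to_subtype
  obtain ⟨τ, hτ⟩ := Embedding.exists_aut_labelling (L := L) (M := M) A
  have hgA : ∀ a ∈ A, g a ∈ closure L' (g '' A) := fun _ h => subset_closure (mem_image_of_mem g h)
  have hgB : ∀ b ∈ B, g b ∈ closure L' (g '' B) := fun _ h => subset_closure (mem_image_of_mem g h)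
  choose φ hφ using hsr.exists_embedding hgA
  obtain ⟨h, hW⟩ := exists_ncard_image_le_of_forall_arrowEmb (hdeg _ (fg_closure (hB.image g)))
    fun j => (c (φ j).toHom.range, τ (φ j))
  obtain ⟨H, hH⟩ := hsr.exists_embedding hgB h
  refine ⟨H.toHom.range, ⟨H.equivRange.symm⟩, ?_⟩
  have hsub : (c '' {A' | A' ≤ H.toHom.range ∧ Nonempty (A' ≃[L] A)}) ×ˢ univ ⊆
      (fun j => (c (φ j).toHom.range, τ (φ j))) '' {j | ∃ e, j = h.comp e} := by
    rintro ⟨_, σ⟩ ⟨⟨S, ⟨hSB, hSA⟩, rfl⟩, -⟩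
    obtain ⟨ψ, hψS, hψσ⟩ := hτ S hSA σ
    obtain ⟨e, he⟩ := hsr.exists_lift hA hgB h hH ψ (hψS ▸ hSB)
    have hφψ : φ (h.comp e) = ψ := Embedding.ext fun a => (hφ _ a).trans (he a _)
    exact ⟨h.comp e, ⟨e, rfl⟩, by simp [hφψ, hψS, hψσ]⟩
  calc _ = ((c '' _) ×ˢ (univ : Set (A ≃[L] A))).ncard := by
        rw [ncard_prod, ncard_univ, mul_comm]
    _ ≤ _ := ncard_le_ncard hsub (toFinite _)
    _ ≤ d := hW

end SemiRetraction

theorem semiRetraction_transfers_substructure_degree_bound_general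
    {L L' : FirstOrder.Language} {M N : Type*} [L.Structure M] [L'.Structure N]
    (g : M → N) (f : N → M)
    (hsr : IsSemiRetraction L L' M N g f)
    (A : L.Substructure M) (hAfin : (A : Set M).Finite)
    (d : ℕ)
    (hdeg : ∀ B₀ : L'.Substructure N, B₀.FG → ∀ r : ℕ, 2 ≤ r →
      ArrowEmb L' N (Substructure.closure L' (g '' (A : Set M))) B₀ r d) :
    ∃ d₀ : ℕ, 1 ≤ d₀ ∧ Nat.card (A ≃[L] A) * d₀ ≤ d ∧
      ∀ B : L.Substructure M, (B : Set M).Finite → ∀ r : ℕ, 2 ≤ r →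
        ArrowSub L M A B r d₀ := by
  have : Finite A := hAfin.to_subtype
  have hk : 0 < Nat.card (A ≃[L] A) := Nat.card_pos_iff.2 ⟨⟨.refl L A⟩, inferInstance⟩
  have hkd : Nat.card (A ≃[L] A) ≤ d := by
    obtain ⟨A₁, ⟨iso⟩, hle⟩ :=
      hsr.exists_card_aut_mul_ncard_le hAfin hdeg hAfin fun _ => (0 : Fin 1)
    have hcopy : A₁ ∈ {A' | A' ≤ A₁ ∧ Nonempty (A' ≃[L] A)} := ⟨le_rfl, ⟨iso⟩⟩
    exact (Nat.le_mul_of_pos_right _ <|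
      (ncard_pos (toFinite _)).2 ⟨_, mem_image_of_mem _ hcopy⟩).trans hle
  refine ⟨d / Nat.card (A ≃[L] A), (Nat.one_le_div_iff hk).2 hkd, Nat.mul_div_le d _,
    fun B hB r _ c => ?_⟩
  obtain ⟨B', hB', hle⟩ := hsr.exists_card_aut_mul_ncard_le hAfin hdeg hB c
  exact ⟨B', hB', (Nat.le_div_iff_mul_le hk).2 (by rwa [mul_comm])⟩

/-- Corollary 5.2 / `degrees_bound`: if `𝒜` is a locally finite semi-retract of
`ℬ` via `(g, f)` and `A' = ⟨g(A)⟩_ℬ` has Ramsey degree for embeddings at most `d` in `ℬ`, then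
`A` has Ramsey degree for substructures at most `d / |Aut(A)|` in `𝒜`: there is `d₀ ≥ 1` with
`|Aut(A)| · d₀ ≤ d` such that `𝒜 → (B)^A_{r,d₀}` for all finite `B ⊆ 𝒜` and all `r ≥ 2`. -/
theorem semiRetraction_transfers_substructure_degree_bound
    {L L' : FirstOrder.Language} {M N : Type*} [L.Structure M] [L'.Structure N]
    (g : M → N) (f : N → M)
    (hlf : StructLocallyFinite L M)
    (hsr : IsSemiRetraction L L' M N g f)
    (A : L.Substructure M) (hAfin : (A : Set M).Finite)
    (d : ℕ) (hd : 1 ≤ d)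
    (hdeg : ∀ B₀ : L'.Substructure N, B₀.FG → ∀ r : ℕ, 2 ≤ r →
      ArrowEmb L' N (Substructure.closure L' (g '' (A : Set M))) B₀ r d) :
    ∃ d₀ : ℕ, 1 ≤ d₀ ∧ Nat.card (A ≃[L] A) * d₀ ≤ d ∧
      ∀ B : L.Substructure M, (B : Set M).Finite → ∀ r : ℕ, 2 ≤ r →
        ArrowSub L M A B r d₀ :=
  semiRetraction_transfers_substructure_degree_bound_general g f hsr A hAfin d hdeg
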